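/- Let f ∈ A₁(c). Then for every x ∈ (−1,1): (1+c₁)·(f(x)−c₃) ≤ f′(x)·(x−c₁)·(1+x) and f′(x)·(x−c₁)·(1−x) ≤ (1−c₁)·(f(x)−c₃). Equivalently, for x ≠ c₁: (1+c₁)/((x−c₁)(1+x)) ≤ f′(x)/(f(x)−c₃) ≤ (1−c₁)/((x−c₁)(1−x)). -/

import Mathlib

open Set Complex

noncomputable section

/-- The doubly-slit plane `ℂ(J)` for `J ⊆ ℝ`. -/
def CSlit (J : Set ℝ) : Set ℂ := {z : ℂ | z.im ≠ 0 ∨ z.re ∈ J}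

/-- `ℂ₁ = ℂ((−1,1))`. -/
def C1 : Set ℂ := CSlit (Set.Ioo (-1 : ℝ) 1)

/-- The class `A₁(c)` of normalized Herglotz functions. -/
structure MemA1 (c₁ c₂ c₃ c₄ : ℝ) (f : ℂ → ℂ) : Prop where
  holo : DifferentiableOn ℂ f C1
  maps : Set.MapsTo f C1 C1
  symm : ∀ z ∈ C1, f (starRingEnd ℂ z) = starRingEnd ℂ (f z)
  upper : ∀ z ∈ C1, 0 < z.im → 0 ≤ (f z).im
  lower : ∀ z ∈ C1, z.im < 0 → (f z).im ≤ 0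
  val1 : f (c₁ : ℂ) = (c₃ : ℂ)
  val2 : f (c₂ : ℂ) = (c₄ : ℂ)

/-!
Perturb `f` to `g = f - c₃ + ε (z - c₁)`, which maps `ℂ₊` strictly into `ℂ₊`, is real on `(-1, 1)`
with the sign of `x - c₁` (by monotonicity of `f`), and has a simple zero at `c₁`. The Möbius maps
`(z - c₁) / (1 ∓ z)` share these properties. Hence `arg g - arg ((z - c₁) / (1 - z))` and
`arg ((z - c₁) / (1 + z)) - arg g` are harmonic on `ℂ₊`, bounded above, with nonpositive boundary
values on `ℝ ∖ {±1}` (the quotients tend to positive reals on `(-1, 1)`, the Möbius maps to real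
values of the right sign outside `[-1, 1]` and at `∞`), so a Phragmén–Lindelöf argument makes them
`≤ 0`. At real `x ≠ c₁` they vanish, so their vertical derivative, which by Cauchy–Riemann is a
difference of logarithmic derivatives, has a sign:
`(1 + c₁) / ((x - c₁) (1 + x)) ≤ g' x / g x ≤ (1 - c₁) / ((x - c₁) (1 - x))`.
Let `ε → 0`; `f x ≠ c₃` for `x ≠ c₁` by the identity theorem, since `f c₂ ≠ f c₁`.
-/

open Filter Topology Bornology Metric Real

local notation "ℂ₊" => Complex.im ⁻¹' Ioi (0 : ℝ)

lemma isOpen_upperHalfPlane : IsOpen ℂ₊ := isOpen_Ioi.preimage continuous_im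

lemma arg_div_of_im_pos {u w : ℂ} (hu : 0 < u.im) (hw : 0 < w.im) :
    arg (u / w) = arg u - arg w := by
  have hu_pi : arg u < π := arg_lt_pi_iff.2 (Or.inr hu.ne')
  have hw_pi : arg w < π := arg_lt_pi_iff.2 (Or.inr hw.ne')
  have hu_nn : 0 ≤ arg u := arg_nonneg_iff.2 hu.le
  have hw_nn : 0 ≤ arg w := arg_nonneg_iff.2 hw.le
  have hinv : arg w⁻¹ = -arg w := by rw [arg_inv, if_neg hw_pi.ne]
  rw [div_eq_mul_inv, (arg_mul_eq_add_arg_iff (fun h => by simp [h] at hu)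
    (inv_ne_zero fun h => by simp [h] at hw)).2 ?_, hinv, sub_eq_add_neg]
  rw [hinv]
  constructor <;> linarith

lemma re_le_of_forall_mem_frontier_eventually_le {U : Set ℂ} (hU : IsOpen U) (hb : IsBounded U)
    {Φ : ℂ → ℂ} (hΦ : DifferentiableOn ℂ Φ U) {B : ℝ}
    (hbd : ∀ p ∈ frontier U, ∀ ε > 0, ∀ᶠ z in 𝓝[U] p, (Φ z).re ≤ B + ε) :
    ∀ z ∈ U, (Φ z).re ≤ B := by
  intro z₀ hz₀
  refine le_of_forall_pos_le_add fun ε hε => ?_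
  by_contra! hlt
  -- maximum modulus for `exp ∘ Φ` on the superlevel set `V`, whose closure stays inside `U`
  set V := U ∩ Φ ⁻¹' {w | B + ε < w.re}
  have hVU : V ⊆ U := inter_subset_left
  have hV : IsOpen V :=
    hΦ.continuousOn.isOpen_inter_preimage hU (isOpen_lt continuous_const continuous_re)
  have hclV : closure V ⊆ U := by
    intro p hp
    by_contra hpU
    have hpf : p ∈ frontier U := ⟨closure_mono hVU hp, by rwa [hU.interior_eq]⟩
    have := mem_closure_iff_nhdsWithin_neBot.1 hp
    obtain ⟨z, hzle, hzV⟩ :=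
      (((hbd p hpf ε hε).filter_mono (nhdsWithin_mono p hVU)).and self_mem_nhdsWithin).exists
    exact hzle.not_gt hzV.2
  have hfr : ∀ z ∈ frontier V, ‖exp (Φ z)‖ ≤ Real.exp (B + ε) := by
    intro z hz
    rw [norm_exp, Real.exp_le_exp]
    rw [hV.frontier_eq] at hz
    exact not_lt.1 fun h => hz.2 ⟨hclV hz.1, h⟩
  have := norm_le_of_forall_mem_frontier_norm_le (hb.subset hVU)
    ⟨(hΦ.mono hVU).cexp, (hΦ.continuousOn.mono hclV).cexp⟩ hfr (subset_closure ⟨hz₀, hlt⟩)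
  rw [norm_exp, Real.exp_le_exp] at this
  linarith

lemma le_of_forall_pos_le_add_mul {x y K : ℝ} (h : ∀ δ > 0, x ≤ y + δ * K) : x ≤ y := by
  have hlim : Tendsto (fun δ => y + δ * K) (𝓝 0) (𝓝 (y + 0 * K)) :=
    tendsto_const_nhds.add (tendsto_id.mul_const K)
  rw [zero_mul, add_zero] at hlim
  exact ge_of_tendsto (hlim.mono_left nhdsWithin_le_nhds)
    (eventually_nhdsWithin_of_forall fun δ (hδ : δ ∈ Ioi 0) => h δ hδ)

lemma im_eq_zero_or_le_norm_of_mem_frontier {R : ℝ} {p : ℂ}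
    (hp : p ∈ frontier (ball 0 R ∩ ℂ₊)) : p.im = 0 ∨ R ≤ ‖p‖ := by
  have hopen : IsOpen (ball (0 : ℂ) R ∩ ℂ₊) := isOpen_ball.inter isOpen_upperHalfPlane
  have him : 0 ≤ p.im :=
    closure_lt_subset_le continuous_const continuous_im (closure_mono inter_subset_right hp.1)
  rw [hopen.frontier_eq, Set.mem_sdiff, mem_inter_iff, mem_ball_zero_iff] at hp
  by_contra! h
  exact hp.2 ⟨h.2, lt_of_le_of_ne him (Ne.symm h.1)⟩

lemma log_norm_sub_le_of_mem_ball {R : ℝ} {z : ℂ} (hz : z ∈ ball 0 R) {a : ℝ} (hza : z ≠ a) :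
    Real.log ‖z - a‖ ≤ Real.log (R + |a|) := by
  refine Real.log_le_log (norm_pos_iff.2 (sub_ne_zero.2 hza)) ?_
  calc ‖z - a‖ ≤ ‖z‖ + ‖(a : ℂ)‖ := norm_sub_le _ _
    _ ≤ R + |a| := by rw [norm_real, Real.norm_eq_abs]; linarith [mem_ball_zero_iff.1 hz]

lemma ne_ofReal_of_mem_upperHalfPlane {z : ℂ} (hz : z ∈ ℂ₊) (a : ℝ) : z ≠ a := fun h => by
  simp [h] at hz

lemma sum_log_norm_sub_le {s : Finset ℝ} {R : ℝ} {z : ℂ} (hz : z ∈ ball 0 R ∩ ℂ₊) :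
    ∑ a ∈ s, Real.log ‖z - a‖ ≤ ∑ a ∈ s, Real.log (R + |a|) :=
  Finset.sum_le_sum fun a _ =>
    log_norm_sub_le_of_mem_ball hz.1 (ne_ofReal_of_mem_upperHalfPlane hz.2 a)

lemma eventually_sum_log_norm_sub_le {s : Finset ℝ} {a : ℝ} (has : a ∈ s) {R : ℝ} (hR : 1 ≤ R)
    (C : ℝ) : ∀ᶠ (z : ℂ) in 𝓝[ball 0 R ∩ ℂ₊] (a : ℂ),
      ∑ b ∈ s, Real.log ‖z - b‖ ≤ C + ∑ b ∈ s, Real.log (R + |b|) := by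
  have hU : ball 0 R ∩ ℂ₊ ⊆ {(a : ℂ)}ᶜ := fun z hz => ne_ofReal_of_mem_upperHalfPlane hz.2 a
  have hlog :=
    (tendsto_log_nhdsGT_zero.comp (tendsto_norm_sub_self_nhdsNE (a : ℂ))).eventually_le_atBot C
  filter_upwards [hlog.filter_mono (nhdsWithin_mono _ hU), self_mem_nhdsWithin] with z hza hzU
  have hrest : ∑ b ∈ s.erase a, Real.log ‖z - b‖ ≤ ∑ b ∈ s.erase a, Real.log (R + |b|) :=
    Finset.sum_le_sum fun b _ =>
      log_norm_sub_le_of_mem_ball hzU.1 (ne_ofReal_of_mem_upperHalfPlane hzU.2 b)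
  have hRa : 0 ≤ Real.log (R + |a|) := Real.log_nonneg (by linarith [abs_nonneg a])
  simp only [Function.comp_apply] at hza
  rw [← Finset.add_sum_erase s _ has, ← Finset.add_sum_erase s _ has]
  linarith

/-- The logarithmic terms tend to `-∞` at the exceptional points `s`, where only the upper bound
`M` on `Φ` is available. -/
lemma re_add_sum_log_le {Φ : ℂ → ℂ} {s : Finset ℝ} {M η R₀ R δ : ℝ}
    (hΦ : DifferentiableOn ℂ Φ ℂ₊) (hM : ∀ z ∈ ℂ₊, (Φ z).re ≤ M)
    (hreal : ∀ p : ℝ, p ∉ s → ∀ᶠ z in 𝓝[ℂ₊] (p : ℂ), (Φ z).re ≤ η)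
    (hR₀ : ∀ z ∈ ℂ₊, R₀ ≤ ‖z‖ → (Φ z).re ≤ η) (hR : R₀ < R) (hR1 : 1 ≤ R) (hδ : 0 < δ) :
    ∀ z ∈ ball 0 R ∩ ℂ₊, (Φ z).re + δ * ∑ a ∈ s, Real.log ‖z - a‖ ≤
      η + δ * ∑ a ∈ s, Real.log (R + |a|) := by
  set U := ball (0 : ℂ) R ∩ ℂ₊
  have hΨ : ∀ z, (Φ z + δ * ∑ a ∈ s, Complex.log (z - a)).re =
      (Φ z).re + δ * ∑ a ∈ s, Real.log ‖z - a‖ := fun z => by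
    simp [Complex.re_sum, Complex.log_re]
  have hΨd : DifferentiableOn ℂ (fun z => Φ z + δ * ∑ a ∈ s, Complex.log (z - a)) U := by
    intro z hz
    have hz' : 0 < z.im := hz.2
    refine (((hΦ.differentiableAt (isOpen_upperHalfPlane.mem_nhds hz')).add
      ((DifferentiableAt.fun_sum fun a _ => ?_).const_mul _))).differentiableWithinAt
    exact (differentiableAt_id.sub_const _).clog (Or.inr (by simpa using hz'.ne'))
  intro z hz
  rw [← hΨ]
  refine re_le_of_forall_mem_frontier_eventually_le
    (isOpen_ball.inter isOpen_upperHalfPlane) (isBounded_ball.subset inter_subset_left)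
    hΨd (fun p hp ε hε => ?_) z hz
  suffices ∀ᶠ z in 𝓝[U] p, (Φ z).re + δ * ∑ a ∈ s, Real.log ‖z - a‖ ≤
      η + δ * ∑ a ∈ s, Real.log (R + |a|) by
    filter_upwards [this] with z hz
    rw [hΨ]; linarith
  rcases im_eq_zero_or_le_norm_of_mem_frontier hp with hp0 | hpR
  · obtain ⟨a, rfl⟩ : ∃ a : ℝ, p = a := ⟨p.re, Complex.ext rfl (by simp [hp0])⟩
    by_cases has : a ∈ s
    · filter_upwards [eventually_sum_log_norm_sub_le has hR1 ((η - M) / δ), self_mem_nhdsWithin]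
        with z hzlog hzU
      have hδa : δ * ((η - M) / δ) = η - M := by field_simp
      nlinarith [hM z hzU.2]
    · filter_upwards [(hreal a has).filter_mono (nhdsWithin_mono _ inter_subset_right),
        self_mem_nhdsWithin] with z hzΦ hzU
      nlinarith [sum_log_norm_sub_le (s := s) hzU]
  · have : ∀ᶠ z in 𝓝 p, R₀ < ‖z‖ :=
      (isOpen_lt continuous_const continuous_norm).mem_nhds (hR.trans_le hpR)
    filter_upwards [nhdsWithin_le_nhds this, self_mem_nhdsWithin] with z hzR hzU
    nlinarith [sum_log_norm_sub_le (s := s) hzU, hR₀ z hzU.2 hzR.le]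

theorem re_nonpos_of_upperHalfPlane {Φ : ℂ → ℂ} {s : Finset ℝ} {M : ℝ}
    (hΦ : DifferentiableOn ℂ Φ ℂ₊) (hM : ∀ z ∈ ℂ₊, (Φ z).re ≤ M)
    (hreal : ∀ p : ℝ, p ∉ s → ∀ ε > 0, ∀ᶠ z in 𝓝[ℂ₊] (p : ℂ), (Φ z).re ≤ ε)
    (hinf : ∀ ε > 0, ∀ᶠ z in cobounded ℂ ⊓ 𝓟 ℂ₊, (Φ z).re ≤ ε) :
    ∀ z ∈ ℂ₊, (Φ z).re ≤ 0 := by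
  intro z hz
  refine le_of_forall_pos_le_add fun η hη => ?_
  obtain ⟨R₀, -, hR₀⟩ :=
    hasBasis_cobounded_norm.eventually_iff.1 (eventually_inf_principal.1 (hinf η hη))
  set R := max (R₀ + 1) (max (‖z‖ + 1) 1)
  have hzU : z ∈ ball 0 R ∩ ℂ₊ :=
    ⟨mem_ball_zero_iff.2 (lt_max_of_lt_right (lt_max_of_lt_left (by linarith))), hz⟩
  refine le_of_forall_pos_le_add_mul
    (K := ∑ a ∈ s, Real.log (R + |a|) - ∑ a ∈ s, Real.log ‖z - a‖) fun δ hδ => ?_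
  have := re_add_sum_log_le hΦ hM (fun p hp => hreal p hp η hη) (fun w hw hwR => hR₀ hwR hw)
    (lt_max_of_lt_left (by linarith)) (le_max_of_le_right (le_max_right _ _)) hδ z hzU
  linarith

/-- `limsup (arg ∘ G₁ - arg ∘ G₂) ≤ 0` along `l`. -/
def ArgLEAlong (l : Filter ℂ) (G₁ G₂ : ℂ → ℂ) : Prop :=
  ∀ ε > 0, ∀ᶠ z in l, arg (G₁ z) - arg (G₂ z) ≤ ε

theorem arg_le_arg_of_upperHalfPlane {G₁ G₂ : ℂ → ℂ} {s : Finset ℝ}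
    (hd₁ : DifferentiableOn ℂ G₁ ℂ₊) (hd₂ : DifferentiableOn ℂ G₂ ℂ₊)
    (h₁ : MapsTo G₁ ℂ₊ ℂ₊) (h₂ : MapsTo G₂ ℂ₊ ℂ₊)
    (hreal : ∀ p : ℝ, p ∉ s → ArgLEAlong (𝓝[ℂ₊] (p : ℂ)) G₁ G₂)
    (hinf : ArgLEAlong (cobounded ℂ ⊓ 𝓟 ℂ₊) G₁ G₂) :
    ∀ z ∈ ℂ₊, arg (G₁ z) ≤ arg (G₂ z) := by
  set Φ := fun z => -I * (Complex.log (G₁ z) - Complex.log (G₂ z))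
  have hΦ : ∀ z, (Φ z).re = arg (G₁ z) - arg (G₂ z) := fun z => by simp [Φ, log_im]
  have hΦd : DifferentiableOn ℂ Φ ℂ₊ := fun z hz =>
    (((hd₁ z hz).clog (Or.inr (h₁ hz).ne')).sub ((hd₂ z hz).clog (Or.inr (h₂ hz).ne'))).const_mul _
  have hM : ∀ z ∈ ℂ₊, (Φ z).re ≤ π := fun z hz => by
    rw [hΦ]
    linarith [arg_le_pi (G₁ z), arg_nonneg_iff.2 (h₂ hz).le]
  intro z hz
  have := re_nonpos_of_upperHalfPlane hΦd hM
    (fun p hp ε hε => by simpa only [hΦ] using hreal p hp ε hε)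
    (fun ε hε => by simpa only [hΦ] using hinf ε hε) z hz
  linarith [hΦ z]

lemma argLEAlong_of_tendsto_div {l : Filter ℂ} {G₁ G₂ : ℂ → ℂ} (h₁ : ∀ᶠ z in l, 0 < (G₁ z).im)
    (h₂ : ∀ᶠ z in l, 0 < (G₂ z).im) {ζ : ℝ} (hζ : 0 < ζ)
    (h : Tendsto (fun z => G₁ z / G₂ z) l (𝓝 ζ)) : ArgLEAlong l G₁ G₂ := by
  intro ε hε
  have harg : Tendsto (fun z => arg (G₁ z / G₂ z)) l (𝓝 0) := by
    have := (continuousAt_arg (Or.inl (by simpa using hζ))).tendsto.comp h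
    rwa [arg_ofReal_of_nonneg hζ.le] at this
  filter_upwards [harg.eventually_lt_const hε, h₁, h₂] with z hz hz₁ hz₂
  rw [← arg_div_of_im_pos hz₁ hz₂]
  exact hz.le

lemma argLEAlong_of_tendsto_neg {l : Filter ℂ} {G₁ G₂ : ℂ → ℂ} (h₂ : ∀ᶠ z in l, 0 ≤ (G₂ z).im)
    {w : ℝ} (hw : w < 0) (h : Tendsto G₂ l (𝓝 w)) : ArgLEAlong l G₁ G₂ := by
  intro ε hε
  have harg : Tendsto (fun z => arg (G₂ z)) l (𝓝 π) :=
    (tendsto_arg_nhdsWithin_im_nonneg_of_re_neg_of_im_zero (by simpa using hw) (by simp)).comp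
      (tendsto_nhdsWithin_iff.2 ⟨h, h₂⟩)
  filter_upwards [harg.eventually_const_lt (by linarith : π - ε < π)] with z hz
  linarith [arg_le_pi (G₁ z)]

lemma argLEAlong_of_tendsto_pos {l : Filter ℂ} {G₁ G₂ : ℂ → ℂ} (h₂ : ∀ᶠ z in l, 0 ≤ (G₂ z).im)
    {w : ℝ} (hw : 0 < w) (h : Tendsto G₁ l (𝓝 w)) : ArgLEAlong l G₁ G₂ := by
  intro ε hε
  have harg : Tendsto (fun z => arg (G₁ z)) l (𝓝 0) := by
    have := (continuousAt_arg (Or.inl (by simpa using hw))).tendsto.comp h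
    rwa [arg_ofReal_of_nonneg hw.le] at this
  filter_upwards [harg.eventually_lt_const hε, h₂] with z hz hz₂
  linarith [arg_nonneg_iff.2 hz₂]

lemma div_eq_ofReal_of_im_eq_zero {a b : ℂ} (ha : a.im = 0) (hb : b.im = 0) :
    a / b = ((a.re / b.re : ℝ) : ℂ) := by
  conv_lhs => rw [← re_add_im a, ← re_add_im b, ha, hb]
  simp

lemma tendsto_add_mul_I_nhdsGT (x : ℝ) :
    Tendsto (fun t : ℝ => (x : ℂ) + t * I) (𝓝[>] 0) (𝓝[ℂ₊] (x : ℂ)) := by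
  refine tendsto_nhdsWithin_iff.2 ⟨?_, eventually_nhdsWithin_of_forall fun t (ht : 0 < t) => ?_⟩
  · exact ((continuous_const.add (continuous_ofReal.mul continuous_const)).tendsto' 0 _
      (by simp)).mono_left nhdsWithin_le_nhds
  · simpa using ht

/-- The vertical difference quotients `(h (x + t i) - h x) / (t i)` have real part
`(h (x + t i)).im / t ≥ 0`. -/
lemma re_nonneg_of_hasDerivAt_of_im_nonneg {h : ℂ → ℂ} {h' : ℂ} {x : ℝ} (hd : HasDerivAt h h' x)
    (hx : (h x).im = 0) (him : ∀ᶠ z in 𝓝[ℂ₊] (x : ℂ), 0 ≤ (h z).im) : 0 ≤ h'.re := by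
  have hline : HasDerivAt (fun w : ℂ => (x : ℂ) + w * I) I 0 := by
    simpa using ((hasDerivAt_id (0 : ℂ)).mul_const I).const_add (x : ℂ)
  have hd₀ : HasDerivAt h h' ((x : ℂ) + 0 * I) := by simpa using hd
  have hφ := ((hd₀.comp 0 hline).const_mul (-I)).real_of_complex
  have hslope := hφ.tendsto_slope_zero_right
  refine ge_of_tendsto (by simpa [mul_left_comm I] using hslope) ?_
  filter_upwards [(tendsto_add_mul_I_nhdsGT x).eventually him, self_mem_nhdsWithin]
    with t ht (htpos : 0 < t)
  simpa [hx] using mul_nonneg (inv_nonneg.2 htpos.le) ht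

theorem re_logDeriv_le_of_arg_le {G₁ G₂ : ℂ → ℂ} {x : ℝ} (hd₁ : DifferentiableAt ℂ G₁ x)
    (hd₂ : DifferentiableAt ℂ G₂ x) (h₁ : MapsTo G₁ ℂ₊ ℂ₊) (h₂ : MapsTo G₂ ℂ₊ ℂ₊)
    (hx₁ : (G₁ x).im = 0) (hx₂ : (G₂ x).im = 0) (hpos : 0 < (G₁ x).re * (G₂ x).re)
    (harg : ∀ z ∈ ℂ₊, arg (G₁ z) ≤ arg (G₂ z)) :
    (logDeriv G₁ x).re ≤ (logDeriv G₂ x).re := by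
  have hne₁ : G₁ x ≠ 0 := fun h => by simp [h] at hpos
  have hne₂ : G₂ x ≠ 0 := fun h => by simp [h] at hpos
  have hr : 0 < (G₂ x).re / (G₁ x).re := div_pos_iff.2 (mul_pos_iff.1 (by rwa [mul_comm]))
  have hq := div_eq_ofReal_of_im_eq_zero hx₂ hx₁
  have hlog := (hd₂.fun_div hd₁ hne₁).hasDerivAt.clog (hq ▸ Or.inl (by simpa using hr))
  have key := re_nonneg_of_hasDerivAt_of_im_nonneg hlog
    (by rw [log_im, hq, arg_ofReal_of_nonneg hr.le])
    (eventually_nhdsWithin_of_forall fun z hz => by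
      rw [log_im, arg_div_of_im_pos (h₂ hz) (h₁ hz), sub_nonneg]
      exact harg z hz)
  rw [← logDeriv_apply, logDeriv_div (x : ℂ) hne₂ hne₁ hd₂ hd₁, sub_re, sub_nonneg] at key
  exact key

lemma isOpen_CSlit {J : Set ℝ} (hJ : IsOpen J) : IsOpen (CSlit J) :=
  (isOpen_ne_fun continuous_im continuous_const).union (hJ.preimage continuous_re)

lemma isOpen_C1 : IsOpen C1 := isOpen_CSlit isOpen_Ioo

lemma upperHalfPlane_subset_C1 : ℂ₊ ⊆ C1 := fun _ hz => Or.inl (ne_of_gt hz)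

lemma ofReal_mem_C1 {x : ℝ} (hx : x ∈ Ioo (-1 : ℝ) 1) : (x : ℂ) ∈ C1 := Or.inr (by simpa using hx)

lemma ball_subset_C1 : ball (0 : ℂ) 1 ⊆ C1 := fun z hz => by
  by_cases h : z.im = 0
  · have := (abs_re_le_norm z).trans_lt (mem_ball_zero_iff.1 hz)
    exact Or.inr (abs_lt.1 this)
  · exact Or.inl h

lemma tendsto_div_nhdsNE_of_hasDerivAt {𝕜 : Type*} [NontriviallyNormedField 𝕜] {G₁ G₂ : 𝕜 → 𝕜}
    {w a b : 𝕜} (h₁ : HasDerivAt G₁ a w) (h₂ : HasDerivAt G₂ b w) (hw₁ : G₁ w = 0)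
    (hw₂ : G₂ w = 0) (hb : b ≠ 0) :
    Tendsto (fun z => G₁ z / G₂ z) (𝓝[≠] w) (𝓝 (a / b)) := by
  refine ((hasDerivAt_iff_tendsto_slope.1 h₁).div (hasDerivAt_iff_tendsto_slope.1 h₂) hb).congr' ?_
  filter_upwards [self_mem_nhdsWithin] with z (hz : z ≠ w)
  rw [Pi.div_apply, slope_def_field, slope_def_field, hw₁, hw₂, sub_zero, sub_zero,
    div_div_div_cancel_right₀ (sub_ne_zero.2 hz)]

structure IsHerglotzWithZero (c : ℝ) (G : ℂ → ℂ) : Prop where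
  differentiableOn : DifferentiableOn ℂ G C1
  mapsTo : MapsTo G ℂ₊ ℂ₊
  im_eq_zero : ∀ x ∈ Ioo (-1 : ℝ) 1, (G x).im = 0
  re_mul_pos : ∀ x ∈ Ioo (-1 : ℝ) 1, x ≠ c → 0 < (G x).re * (x - c)
  apply_eq_zero : G c = 0
  hasDerivAt : ∃ d : ℝ, 0 < d ∧ HasDerivAt G d c

namespace IsHerglotzWithZero

variable {c : ℝ} {G G₁ G₂ : ℂ → ℂ}

lemma differentiableAt (hG : IsHerglotzWithZero c G) {z : ℂ} (hz : z ∈ C1) :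
    DifferentiableAt ℂ G z :=
  hG.differentiableOn.differentiableAt (isOpen_C1.mem_nhds hz)

lemma re_mul_re_pos (h₁ : IsHerglotzWithZero c G₁) (h₂ : IsHerglotzWithZero c G₂) {x : ℝ}
    (hx : x ∈ Ioo (-1 : ℝ) 1) (hxc : x ≠ c) : 0 < (G₁ x).re * (G₂ x).re := by
  have h := mul_pos (h₁.re_mul_pos x hx hxc) (h₂.re_mul_pos x hx hxc)
  exact pos_of_mul_pos_left (a := (G₁ x).re * (G₂ x).re) (by linarith) (sq_nonneg (x - c))

lemma argLEAlong (h₁ : IsHerglotzWithZero c G₁) (h₂ : IsHerglotzWithZero c G₂) {p : ℝ}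
    (hp : p ∈ Ioo (-1 : ℝ) 1) : ArgLEAlong (𝓝[ℂ₊] (p : ℂ)) G₁ G₂ := by
  have hH : ∀ {G : ℂ → ℂ}, IsHerglotzWithZero c G → ∀ᶠ z in 𝓝[ℂ₊] (p : ℂ), 0 < (G z).im :=
    fun hG => eventually_nhdsWithin_of_forall fun _ hz => hG.mapsTo hz
  by_cases hpc : p = c
  · subst hpc
    obtain ⟨d₁, hd₁, hD₁⟩ := h₁.hasDerivAt
    obtain ⟨d₂, hd₂, hD₂⟩ := h₂.hasDerivAt
    refine argLEAlong_of_tendsto_div (hH h₁) (hH h₂) (div_pos hd₁ hd₂) ?_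
    have hsub : ℂ₊ ⊆ {(p : ℂ)}ᶜ := fun z (hz : 0 < z.im) (h : z = p) => by simp [h] at hz
    simpa using (tendsto_div_nhdsNE_of_hasDerivAt hD₁ hD₂ h₁.apply_eq_zero h₂.apply_eq_zero
      (by exact_mod_cast hd₂.ne')).mono_left (nhdsWithin_mono _ hsub)
  · have hpos := h₁.re_mul_re_pos h₂ hp hpc
    have hne : G₂ p ≠ 0 := fun h => by simp [h] at hpos
    refine argLEAlong_of_tendsto_div (hH h₁) (hH h₂) (div_pos_iff.2 (mul_pos_iff.1 hpos)) ?_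
    rw [← div_eq_ofReal_of_im_eq_zero (h₁.im_eq_zero p hp) (h₂.im_eq_zero p hp)]
    exact (((h₁.differentiableAt (ofReal_mem_C1 hp)).continuousAt.div
      (h₂.differentiableAt (ofReal_mem_C1 hp)).continuousAt hne).tendsto).mono_left
      nhdsWithin_le_nhds

end IsHerglotzWithZero

def mobius (c s : ℝ) (z : ℂ) : ℂ := (z - c) / (1 - s * z)

lemma one_sub_mul_pos {s x : ℝ} (hs : s ∈ Icc (-1 : ℝ) 1) (hx : x ∈ Ioo (-1 : ℝ) 1) :
    0 < 1 - s * x := by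
  have : |s * x| < 1 := by
    rw [abs_mul]
    exact mul_lt_one_of_nonneg_of_lt_one_right (abs_le.2 hs) (abs_nonneg _) (abs_lt.2 hx)
  linarith [le_abs_self (s * x)]

lemma one_sub_mul_ne_zero_of_mem_C1 {s : ℝ} (hs : s ∈ Icc (-1 : ℝ) 1) {z : ℂ} (hz : z ∈ C1) :
    1 - s * z ≠ 0 := by
  intro h
  have hre : s * z.re = 1 := by
    have := congrArg re h
    simp only [sub_re, one_re, mul_re, ofReal_re, ofReal_im, zero_mul, sub_zero, zero_re] at this
    linarith
  have him : s * z.im = 0 := by simpa using congrArg im h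
  rcases hz with hz | hz
  · simp [(mul_eq_zero.1 him).resolve_right hz] at hre
  · linarith [one_sub_mul_pos hs hz]

lemma hasDerivAt_mobius (c s : ℝ) {z : ℂ} (hz : 1 - s * z ≠ 0) :
    HasDerivAt (mobius c s) ((1 - s * c) / (1 - s * z) ^ 2) z := by
  refine (((hasDerivAt_id' z).sub_const (c : ℂ)).fun_div
    (((hasDerivAt_id' z).const_mul (s : ℂ)).const_sub 1) hz).congr_deriv ?_
  ring

lemma mobius_ofReal (c s x : ℝ) : mobius c s x = ((x - c) / (1 - s * x) : ℝ) := by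
  push_cast [mobius]
  rfl

lemma im_mobius (c s : ℝ) (z : ℂ) :
    (mobius c s z).im = (1 - s * c) * z.im / normSq (1 - s * z) := by
  simp only [mobius, div_im, sub_im, ofReal_im, sub_zero, sub_re, one_re, mul_re, ofReal_re,
    zero_mul, one_im, mul_im, add_zero, zero_sub, mul_neg]
  ring

lemma tendsto_mobius_cobounded (c : ℝ) {s : ℝ} (hs : s ≠ 0) :
    Tendsto (mobius c s) (cobounded ℂ) (𝓝 (-s⁻¹ : ℝ)) := by
  have hcont : ContinuousAt (fun w : ℂ => (1 - c * w) / (w - s)) 0 :=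
    (continuousAt_const.sub (continuousAt_const.mul continuousAt_id)).div
      (continuousAt_id.sub continuousAt_const) (by simpa using hs)
  have hval : (1 - c * 0) / (0 - s : ℂ) = ((-s⁻¹ : ℝ) : ℂ) := by push_cast; ring
  have := hcont.tendsto.comp tendsto_inv₀_cobounded
  rw [hval] at this
  refine this.congr' ?_
  filter_upwards [hasBasis_cobounded_norm.eventually_iff.2 ⟨1, trivial, fun z hz => hz⟩]
    with z (hz : 1 ≤ ‖z‖)
  have hz0 : z ≠ 0 := norm_pos_iff.1 (by linarith)
  simp only [Function.comp, mobius]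
  field_simp

lemma isHerglotzWithZero_mobius {c s : ℝ} (hc : c ∈ Ioo (-1 : ℝ) 1) (hs : s ∈ Icc (-1 : ℝ) 1) :
    IsHerglotzWithZero c (mobius c s) where
  differentiableOn z hz := (hasDerivAt_mobius c s
    (one_sub_mul_ne_zero_of_mem_C1 hs hz)).differentiableAt.differentiableWithinAt
  mapsTo z hz := by
    show 0 < (mobius c s z).im
    rw [im_mobius]
    exact div_pos (mul_pos (one_sub_mul_pos hs hc) hz)
      (normSq_pos.2 (one_sub_mul_ne_zero_of_mem_C1 hs (upperHalfPlane_subset_C1 hz)))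
  im_eq_zero x _ := by rw [mobius_ofReal, ofReal_im]
  re_mul_pos x hx hxc := by
    rw [mobius_ofReal, ofReal_re, div_mul_eq_mul_div]
    exact div_pos (mul_self_pos.2 (sub_ne_zero.2 hxc)) (one_sub_mul_pos hs hx)
  apply_eq_zero := by simp [mobius]
  hasDerivAt := by
    have hsc := one_sub_mul_pos hs hc
    refine ⟨1 / (1 - s * c), one_div_pos.2 hsc,
      (hasDerivAt_mobius c s (by exact_mod_cast hsc.ne')).congr_deriv ?_⟩
    have : (1 : ℂ) - s * c ≠ 0 := by exact_mod_cast hsc.ne'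
    push_cast
    field_simp

lemma logDeriv_mobius {c s x : ℝ} (hxc : x ≠ c) (hsx : 1 - s * x ≠ 0) :
    logDeriv (mobius c s) x = ((1 - s * c) / ((x - c) * (1 - s * x)) : ℝ) := by
  have h₁ : (x : ℂ) - c ≠ 0 := by exact_mod_cast sub_ne_zero.2 hxc
  have h₂ : (1 : ℂ) - s * x ≠ 0 := by exact_mod_cast hsx
  rw [logDeriv_apply, (hasDerivAt_mobius c s h₂).deriv, mobius]
  push_cast
  field_simp

lemma tendsto_mobius_nhdsWithin (c s : ℝ) {p : ℝ} (hp : 1 - s * p ≠ 0) :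
    Tendsto (mobius c s) (𝓝[ℂ₊] (p : ℂ)) (𝓝 ((p - c) / (1 - s * p) : ℝ)) := by
  rw [← mobius_ofReal]
  exact (hasDerivAt_mobius c s (by exact_mod_cast hp)).continuousAt.tendsto.mono_left
    nhdsWithin_le_nhds

lemma lt_neg_one_or_one_lt {p : ℝ} (hp : p ∉ ({-1, 1} : Finset ℝ)) (hp' : p ∉ Ioo (-1 : ℝ) 1) :
    p < -1 ∨ 1 < p := by
  simp only [Finset.mem_insert, Finset.mem_singleton, not_or] at hp
  simp only [mem_Ioo, not_and_or, not_lt] at hp'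
  rcases hp' with h | h
  exacts [Or.inl (lt_of_le_of_ne h hp.1), Or.inr (lt_of_le_of_ne h (Ne.symm hp.2))]

namespace IsHerglotzWithZero

variable {c : ℝ} {G : ℂ → ℂ}

theorem arg_le_arg_mobius_one (hG : IsHerglotzWithZero c G) (hc : c ∈ Ioo (-1 : ℝ) 1) :
    ∀ z ∈ ℂ₊, arg (G z) ≤ arg (mobius c 1 z) := by
  have hM := isHerglotzWithZero_mobius hc (s := 1) (by norm_num)
  have hMim : ∀ {l : Filter ℂ}, l ≤ 𝓟 ℂ₊ → ∀ᶠ z in l, 0 ≤ (mobius c 1 z).im := fun hl =>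
    hl (mem_principal.2 fun z hz => show 0 ≤ (mobius c 1 z).im from (hM.mapsTo hz).le)
  refine arg_le_arg_of_upperHalfPlane (s := {-1, 1})
    (hG.differentiableOn.mono upperHalfPlane_subset_C1)
    (hM.differentiableOn.mono upperHalfPlane_subset_C1) hG.mapsTo hM.mapsTo (fun p hp => ?_)
    (argLEAlong_of_tendsto_neg (hMim inf_le_right) (by norm_num)
      ((tendsto_mobius_cobounded c one_ne_zero).mono_left inf_le_left))
  by_cases hp' : p ∈ Ioo (-1 : ℝ) 1
  · exact hG.argLEAlong hM hp'
  rcases lt_neg_one_or_one_lt hp hp' with h | h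
  · exact argLEAlong_of_tendsto_neg (hMim inf_le_right)
      (div_neg_of_neg_of_pos (by linarith [hc.1]) (by linarith))
      (tendsto_mobius_nhdsWithin c 1 (by linarith))
  · exact argLEAlong_of_tendsto_neg (hMim inf_le_right)
      (div_neg_of_pos_of_neg (by linarith [hc.2]) (by linarith))
      (tendsto_mobius_nhdsWithin c 1 (by linarith))

theorem arg_mobius_neg_one_le_arg (hG : IsHerglotzWithZero c G) (hc : c ∈ Ioo (-1 : ℝ) 1) :
    ∀ z ∈ ℂ₊, arg (mobius c (-1) z) ≤ arg (G z) := by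
  have hM := isHerglotzWithZero_mobius hc (s := -1) (by norm_num)
  have hGim : ∀ {l : Filter ℂ}, l ≤ 𝓟 ℂ₊ → ∀ᶠ z in l, 0 ≤ (G z).im := fun hl =>
    hl (mem_principal.2 fun z hz => show 0 ≤ (G z).im from (hG.mapsTo hz).le)
  refine arg_le_arg_of_upperHalfPlane (s := {-1, 1})
    (hM.differentiableOn.mono upperHalfPlane_subset_C1)
    (hG.differentiableOn.mono upperHalfPlane_subset_C1) hM.mapsTo hG.mapsTo (fun p hp => ?_)
    (argLEAlong_of_tendsto_pos (hGim inf_le_right) (by norm_num)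
      ((tendsto_mobius_cobounded c (by norm_num)).mono_left inf_le_left))
  by_cases hp' : p ∈ Ioo (-1 : ℝ) 1
  · exact hM.argLEAlong hG hp'
  rcases lt_neg_one_or_one_lt hp hp' with h | h
  · exact argLEAlong_of_tendsto_pos (hGim inf_le_right)
      (div_pos_of_neg_of_neg (by linarith [hc.1]) (by linarith))
      (tendsto_mobius_nhdsWithin c (-1) (by linarith))
  · exact argLEAlong_of_tendsto_pos (hGim inf_le_right)
      (div_pos (by linarith [hc.2]) (by linarith))
      (tendsto_mobius_nhdsWithin c (-1) (by linarith))

theorem re_logDeriv_bounds (hG : IsHerglotzWithZero c G) (hc : c ∈ Ioo (-1 : ℝ) 1) {x : ℝ}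
    (hx : x ∈ Ioo (-1 : ℝ) 1) (hxc : x ≠ c) :
    (1 + c) / ((x - c) * (1 + x)) ≤ (logDeriv G x).re ∧
      (logDeriv G x).re ≤ (1 - c) / ((x - c) * (1 - x)) := by
  have hMneg := isHerglotzWithZero_mobius hc (s := -1) (by norm_num)
  have hMone := isHerglotzWithZero_mobius hc (s := 1) (by norm_num)
  have hxC := ofReal_mem_C1 hx
  constructor
  · have := re_logDeriv_le_of_arg_le (hMneg.differentiableAt hxC) (hG.differentiableAt hxC)
      hMneg.mapsTo hG.mapsTo (hMneg.im_eq_zero x hx) (hG.im_eq_zero x hx)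
      (hMneg.re_mul_re_pos hG hx hxc) (hG.arg_mobius_neg_one_le_arg hc)
    simpa only [logDeriv_mobius (s := -1) hxc (by linarith [hx.1]), ofReal_re, neg_one_mul,
      sub_neg_eq_add] using this
  · have := re_logDeriv_le_of_arg_le (hG.differentiableAt hxC) (hMone.differentiableAt hxC)
      hG.mapsTo hMone.mapsTo (hG.im_eq_zero x hx) (hMone.im_eq_zero x hx)
      (hG.re_mul_re_pos hMone hx hxc) (hG.arg_le_arg_mobius_one hc)
    simpa only [logDeriv_mobius (s := 1) hxc (by linarith [hx.2]), ofReal_re, one_mul] using this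

end IsHerglotzWithZero

lemma eqOn_const_of_forall_Ioo {U : Set ℂ} {g : ℂ → ℂ} (hg : AnalyticOnNhd ℂ g U)
    (hU : IsPreconnected U) {a b : ℝ} (hab : a < b) (hsub : ∀ y ∈ Ioo a b, (y : ℂ) ∈ U) {w : ℂ}
    (hw : ∀ y ∈ Ioo a b, g y = w) : EqOn g (fun _ => w) U := by
  have hm : (a + b) / 2 ∈ Ioo a b := ⟨by linarith, by linarith⟩
  refine hg.eqOn_of_preconnected_of_frequently_eq analyticOnNhd_const hU (hsub _ hm) ?_
  have hreal : ∃ᶠ y : ℝ in 𝓝[≠] ((a + b) / 2), g y = w :=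
    (eventually_nhdsWithin_of_eventually_nhds
      (Filter.mem_of_superset (isOpen_Ioo.mem_nhds hm) hw)).frequently
  exact (continuous_ofReal.continuousWithinAt.tendsto_nhdsWithin
    fun y (hy : y ≠ _) => ofReal_injective.ne hy).frequently hreal

lemma div_le_div_iff_of_mul_pos {a b s t : ℝ} (hst : 0 < s * t) :
    a / s ≤ b / t ↔ a * t ≤ b * s := by
  have hs : s ≠ 0 := fun h => by simp [h] at hst
  have ht : t ≠ 0 := fun h => by simp [h] at hst
  rw [← mul_div_mul_right a s ht, ← mul_div_mul_right b t hs, mul_comm t s,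
    div_le_div_iff_of_pos_right hst]

namespace MemA1

variable {c₁ c₂ c₃ c₄ : ℝ} {f : ℂ → ℂ}

lemma im_eq_zero (hf : MemA1 c₁ c₂ c₃ c₄ f) {x : ℝ} (hx : x ∈ Ioo (-1 : ℝ) 1) :
    (f x).im = 0 := by
  have h := hf.symm x (ofReal_mem_C1 hx)
  rw [conj_ofReal] at h
  exact conj_eq_iff_im.1 h.symm

lemma hasDerivAt (hf : MemA1 c₁ c₂ c₃ c₄ f) {z : ℂ} (hz : z ∈ C1) : HasDerivAt f (deriv f z) z :=
  (hf.holo.differentiableAt (isOpen_C1.mem_nhds hz)).hasDerivAt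

lemma hasDerivAt_re (hf : MemA1 c₁ c₂ c₃ c₄ f) {x : ℝ} (hx : x ∈ Ioo (-1 : ℝ) 1) :
    HasDerivAt (fun y : ℝ => (f y).re) (deriv f x).re x :=
  (hf.hasDerivAt (ofReal_mem_C1 hx)).real_of_complex

lemma im_deriv_eq_zero (hf : MemA1 c₁ c₂ c₃ c₄ f) {x : ℝ} (hx : x ∈ Ioo (-1 : ℝ) 1) :
    (deriv f x).im = 0 := by
  have h := ((hf.hasDerivAt (ofReal_mem_C1 hx)).const_mul (-I)).real_of_complex
  have h₀ : HasDerivAt (fun y : ℝ => (-I * f y).re) 0 x := by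
    refine (hasDerivAt_const x 0).congr_of_eventuallyEq ?_
    filter_upwards [isOpen_Ioo.mem_nhds hx] with y hy
    simp [hf.im_eq_zero hy]
  simpa using h.unique h₀

lemma re_deriv_nonneg (hf : MemA1 c₁ c₂ c₃ c₄ f) {x : ℝ} (hx : x ∈ Ioo (-1 : ℝ) 1) :
    0 ≤ (deriv f x).re :=
  re_nonneg_of_hasDerivAt_of_im_nonneg (hf.hasDerivAt (ofReal_mem_C1 hx)) (hf.im_eq_zero hx)
    (eventually_nhdsWithin_of_forall fun z hz => hf.upper z (upperHalfPlane_subset_C1 hz) hz)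

lemma monotoneOn_re (hf : MemA1 c₁ c₂ c₃ c₄ f) :
    MonotoneOn (fun y : ℝ => (f y).re) (Ioo (-1) 1) := by
  refine monotoneOn_of_deriv_nonneg (convex_Ioo _ _)
    (fun x hx => (hf.hasDerivAt_re hx).continuousAt.continuousWithinAt) ?_ ?_ <;>
    rw [interior_Ioo]
  · exact fun x hx => (hf.hasDerivAt_re hx).differentiableAt.differentiableWithinAt
  · exact fun x hx => (hf.hasDerivAt_re hx).deriv ▸ hf.re_deriv_nonneg hx

/-- By the identity theorem, `f` cannot be constant on a subinterval since `f c₁ ≠ f c₂`. -/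
lemma strictMonoOn_re (hf : MemA1 c₁ c₂ c₃ c₄ f) (h1 : -1 < c₁) (h12 : c₁ < c₂) (h2 : c₂ < 1)
    (h34 : c₃ < c₄) : StrictMonoOn (fun y : ℝ => (f y).re) (Ioo (-1) 1) := by
  intro a ha b hb hab
  refine lt_of_le_of_ne (hf.monotoneOn_re ha hb hab.le) fun heq => h34.ne ?_
  have hball : ∀ y ∈ Ioo (-1 : ℝ) 1, (y : ℂ) ∈ ball (0 : ℂ) 1 := fun y hy => by
    simpa [abs_lt] using hy
  have hconst : ∀ y ∈ Ioo a b, f y = ((f a).re : ℂ) := fun y hy => by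
    have hy' : y ∈ Ioo (-1 : ℝ) 1 := ⟨ha.1.trans hy.1, hy.2.trans hb.2⟩
    have h₁ := hf.monotoneOn_re ha hy' hy.1.le
    have h₂ := hf.monotoneOn_re hy' hb hy.2.le
    refine Complex.ext ?_ (by simp [hf.im_eq_zero hy'])
    simp only at h₁ h₂ heq
    simp only [ofReal_re]
    linarith
  have hEq := eqOn_const_of_forall_Ioo ((hf.holo.mono ball_subset_C1).analyticOnNhd isOpen_ball)
    (convex_ball 0 1).isPreconnected hab (fun y hy => hball y ⟨ha.1.trans hy.1, hy.2.trans hb.2⟩)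
    hconst
  have e₁ := hEq (hball c₁ ⟨h1, h12.trans h2⟩)
  have e₂ := hEq (hball c₂ ⟨h1.trans h12, h2⟩)
  rw [hf.val1] at e₁
  rw [hf.val2] at e₂
  exact_mod_cast e₁.trans e₂.symm


lemma re_sub_mul_pos (hf : MemA1 c₁ c₂ c₃ c₄ f) (h1 : -1 < c₁) (h12 : c₁ < c₂) (h2 : c₂ < 1)
    (h34 : c₃ < c₄) {x : ℝ} (hx : x ∈ Ioo (-1 : ℝ) 1) (hxc : x ≠ c₁) :
    0 < ((f x).re - c₃) * (x - c₁) := by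
  have hc₁ : c₁ ∈ Ioo (-1 : ℝ) 1 := ⟨h1, h12.trans h2⟩
  have hval : (f c₁).re = c₃ := by simp [hf.val1]
  have hmono := hf.strictMonoOn_re h1 h12 h2 h34
  rcases hxc.lt_or_gt with h | h
  · have := hmono hx hc₁ h
    simp only [hval] at this
    exact mul_pos_of_neg_of_neg (by linarith) (by linarith)
  · have := hmono hc₁ hx h
    simp only [hval] at this
    exact mul_pos (by linarith) (by linarith)

lemma hasDerivAt_add (hf : MemA1 c₁ c₂ c₃ c₄ f) (ε : ℝ) {z : ℂ} (hz : z ∈ C1) :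
    HasDerivAt (fun w => f w - c₃ + ε * (w - c₁)) (deriv f z + ε) z := by
  refine (((hf.hasDerivAt hz).sub_const (c₃ : ℂ)).fun_add
    (((hasDerivAt_id' z).sub_const (c₁ : ℂ)).const_mul (ε : ℂ))).congr_deriv ?_
  rw [mul_one]

lemma isHerglotzWithZero_add (hf : MemA1 c₁ c₂ c₃ c₄ f) (h1 : -1 < c₁) (h12 : c₁ < c₂)
    (h2 : c₂ < 1) (h34 : c₃ < c₄) {ε : ℝ} (hε : 0 < ε) :
    IsHerglotzWithZero c₁ (fun z => f z - c₃ + ε * (z - c₁)) where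
  differentiableOn z hz := (hf.hasDerivAt_add ε hz).differentiableAt.differentiableWithinAt
  mapsTo z hz := by
    show 0 < (f z - c₃ + ε * (z - c₁)).im
    have := hf.upper z (upperHalfPlane_subset_C1 hz) hz
    have hz' : 0 < z.im := hz
    simp only [add_im, sub_im, ofReal_im, im_ofReal_mul, sub_zero]
    positivity
  im_eq_zero x hx := by simp [hf.im_eq_zero hx]
  re_mul_pos x hx hxc := by
    simp only [add_re, sub_re, ofReal_re, re_ofReal_mul]
    nlinarith [hf.re_sub_mul_pos h1 h12 h2 h34 hx hxc,
      mul_pos hε (mul_self_pos.2 (sub_ne_zero.2 hxc))]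
  apply_eq_zero := by simp [hf.val1]
  hasDerivAt := by
    have hc₁ : c₁ ∈ Ioo (-1 : ℝ) 1 := ⟨h1, h12.trans h2⟩
    refine ⟨(deriv f c₁).re + ε, by linarith [hf.re_deriv_nonneg hc₁],
      (hf.hasDerivAt_add ε (ofReal_mem_C1 hc₁)).congr_deriv ?_⟩
    apply Complex.ext <;> simp [hf.im_deriv_eq_zero hc₁]

lemma re_logDeriv_add (hf : MemA1 c₁ c₂ c₃ c₄ f) {x : ℝ} (hx : x ∈ Ioo (-1 : ℝ) 1) (ε : ℝ) :
    (logDeriv (fun z => f z - c₃ + ε * (z - c₁)) x).re =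
      ((deriv f x).re + ε) / ((f x).re - c₃ + ε * (x - c₁)) := by
  rw [logDeriv_apply, (hf.hasDerivAt_add ε (ofReal_mem_C1 hx)).deriv,
    div_eq_ofReal_of_im_eq_zero (by simp [hf.im_deriv_eq_zero hx]) (by simp [hf.im_eq_zero hx]),
    ofReal_re]
  simp

theorem div_bounds (hf : MemA1 c₁ c₂ c₃ c₄ f) (h1 : -1 < c₁) (h12 : c₁ < c₂) (h2 : c₂ < 1)
    (h34 : c₃ < c₄) {x : ℝ} (hx : x ∈ Ioo (-1 : ℝ) 1) (hxc : x ≠ c₁) :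
    (1 + c₁) / ((x - c₁) * (1 + x)) ≤ (deriv f x).re / ((f x).re - c₃) ∧
      (deriv f x).re / ((f x).re - c₃) ≤ (1 - c₁) / ((x - c₁) * (1 - x)) := by
  have hr : (f x).re - c₃ ≠ 0 := fun h => by
    simpa [h] using hf.re_sub_mul_pos h1 h12 h2 h34 hx hxc
  have hlim : Tendsto (fun ε => ((deriv f x).re + ε) / ((f x).re - c₃ + ε * (x - c₁)))
      (𝓝[>] 0) (𝓝 ((deriv f x).re / ((f x).re - c₃))) := by
    have : ContinuousAt (fun ε => ((deriv f x).re + ε) / ((f x).re - c₃ + ε * (x - c₁))) 0 :=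
      (continuousAt_const.add continuousAt_id).div
        (continuousAt_const.add (continuousAt_id.mul continuousAt_const)) (by simpa using hr)
    simpa using this.tendsto.mono_left nhdsWithin_le_nhds
  have hε : ∀ᶠ ε in 𝓝[>] 0,
      (1 + c₁) / ((x - c₁) * (1 + x)) ≤ ((deriv f x).re + ε) / ((f x).re - c₃ + ε * (x - c₁)) ∧
      ((deriv f x).re + ε) / ((f x).re - c₃ + ε * (x - c₁)) ≤ (1 - c₁) / ((x - c₁) * (1 - x)) :=
    eventually_nhdsWithin_of_forall fun ε (hε : 0 < ε) => by
      simpa only [hf.re_logDeriv_add hx] using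
        (hf.isHerglotzWithZero_add h1 h12 h2 h34 hε).re_logDeriv_bounds ⟨h1, h12.trans h2⟩ hx hxc
  exact ⟨ge_of_tendsto hlim (hε.mono fun _ h => h.1), le_of_tendsto hlim (hε.mono fun _ h => h.2)⟩

end MemA1

theorem stmt6_general (c₁ c₂ c₃ c₄ : ℝ)
    (h1 : -1 < c₁) (h12 : c₁ < c₂) (h2 : c₂ < 1)
    (h34 : c₃ < c₄)
    (f : ℂ → ℂ) (hf : MemA1 c₁ c₂ c₃ c₄ f) :
    ∀ x ∈ Set.Ioo (-1 : ℝ) 1,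
      ((1 + c₁) * ((f x).re - c₃) ≤
          deriv (fun y : ℝ => (f y).re) x * (x - c₁) * (1 + x) ∧
        deriv (fun y : ℝ => (f y).re) x * (x - c₁) * (1 - x) ≤
          (1 - c₁) * ((f x).re - c₃)) ∧
      (x ≠ c₁ →
        (1 + c₁) / ((x - c₁) * (1 + x)) ≤
            deriv (fun y : ℝ => (f y).re) x / ((f x).re - c₃) ∧
          deriv (fun y : ℝ => (f y).re) x / ((f x).re - c₃) ≤
            (1 - c₁) / ((x - c₁) * (1 - x))) := by
  intro x hx
  rw [(hf.hasDerivAt_re hx).deriv]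
  refine ⟨?_, hf.div_bounds h1 h12 h2 h34 hx⟩
  rcases eq_or_ne x c₁ with rfl | hxc
  · simp [hf.val1]
  have hpos := hf.re_sub_mul_pos h1 h12 h2 h34 hx hxc
  obtain ⟨hlow, hup⟩ := hf.div_bounds h1 h12 h2 h34 hx hxc
  rw [div_le_div_iff_of_mul_pos (by nlinarith [hx.1])] at hlow
  rw [div_le_div_iff_of_mul_pos (by nlinarith [hx.2])] at hup
  constructor <;> linarith

theorem stmt6 (c₁ c₂ c₃ c₄ : ℝ)
    (h1 : -1 < c₁) (h12 : c₁ < c₂) (h2 : c₂ < 1)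
    (h3 : -1 < c₃) (h34 : c₃ < c₄) (h4 : c₄ < 1)
    (f : ℂ → ℂ) (hf : MemA1 c₁ c₂ c₃ c₄ f) :
    ∀ x ∈ Set.Ioo (-1 : ℝ) 1,
      ((1 + c₁) * ((f x).re - c₃) ≤
          deriv (fun y : ℝ => (f y).re) x * (x - c₁) * (1 + x) ∧
        deriv (fun y : ℝ => (f y).re) x * (x - c₁) * (1 - x) ≤
          (1 - c₁) * ((f x).re - c₃)) ∧
      (x ≠ c₁ →
        (1 + c₁) / ((x - c₁) * (1 + x)) ≤
            deriv (fun y : ℝ => (f y).re) x / ((f x).re - c₃) ∧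
          deriv (fun y : ℝ => (f y).re) x / ((f x).re - c₃) ≤
            (1 - c₁) / ((x - c₁) * (1 - x))) :=
  stmt6_general c₁ c₂ c₃ c₄ h1 h12 h2 h34 f hf
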